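/- arXiv:2103.06469 — 8 statements merged into one kernel-verified Lean document; each statement's English description precedes it below -/
import Mathlib

section
/- Under the double-estimator scheme, where $h^* = \operatorname{argmax}_h (V_h + \epsilon^{(1)}_{h})$ is selected using noise from the first estimator but the value reported is $V_{h^*} + \epsilon^{(2)}_{h^*}$ using independent zero-mean noise from the second estimator, the expected reported value does not exceed the true maximum: $\mathbb{E}[V_{h^*} + \epsilon^{(2)}_{h^*}] \leq \max_h V_h$. -/
/-!
Split the expectation over the events `{h* = h}`. Since the selection `h*` is independent of the
evaluation noise, the noise on `{h* = h}` integrates to `P(h* = h) · E[ε⁽²⁾_h] = 0`, so only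
`E[V_{h*}]` remains, and that is at most `max_h V_h` pointwise.
-/

open MeasureTheory ProbabilityTheory

lemma eval_comp_eq_sum_indicator {Ω ι E : Type*} [Fintype ι] [AddCommMonoid E]
    (X : ι → Ω → E) (S : Ω → ι) (ω : Ω) :
    X (S ω) ω = ∑ i, (S ⁻¹' {i}).indicator (X i) ω := by
  classical
  simp [Set.indicator_apply, Finset.sum_ite_eq]

section Selection

variable {Ω ι E : Type*} [MeasurableSpace Ω] {μ : Measure Ω}
  [Fintype ι] [MeasurableSpace ι] [MeasurableSingletonClass ι]
  [NormedAddCommGroup E] {X : ι → Ω → E} {S : Ω → ι}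

lemma integrable_eval_comp (hX : ∀ i, Integrable (X i) μ) (hS : Measurable S) :
    Integrable (fun ω ↦ X (S ω) ω) μ := by
  simp_rw [eval_comp_eq_sum_indicator X S]
  exact integrable_finsetSum _ fun i _ ↦ (hX i).indicator (hS (measurableSet_singleton i))

lemma integral_eval_comp_of_indepFun [NormedSpace ℝ E] [MeasurableSpace E] [BorelSpace E]
    [SecondCountableTopology E]
    (hX : ∀ i, Integrable (X i) μ) (hS : Measurable S)
    (hXS : IndepFun (fun ω i ↦ X i ω) S μ) :
    ∫ ω, X (S ω) ω ∂μ = ∑ i, μ.real (S ⁻¹' {i}) • ∫ ω, X i ω ∂μ := by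
  simp_rw [eval_comp_eq_sum_indicator X S]
  rw [integral_finsetSum _ fun i _ ↦ (hX i).indicator (hS (measurableSet_singleton i))]
  refine Finset.sum_congr rfl fun i _ ↦ ?_
  rw [integral_indicator (hS (measurableSet_singleton i))]
  exact ((IndepFun_iff_Indep _ _ _).mp hXS.symm).setIntegral_eq_smul (f := fun x ↦ x i)
    hS.comap_le (aemeasurable_pi_lambda _ fun i ↦ (hX i).aemeasurable)
    ⟨{i}, measurableSet_singleton i, rfl⟩ (measurable_pi_apply i).aestronglyMeasurable

end Selection

theorem double_estimator_no_overestimate_general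
    {Ω : Type*} [MeasurableSpace Ω] (μ : Measure Ω) [IsProbabilityMeasure μ]
    (n : ℕ) (V : Fin n → ℝ) (ε₂ : Fin n → Ω → ℝ)
    (hint₂ : ∀ h, Integrable (ε₂ h) μ)
    (hmean₂ : ∀ h, ∫ ω, ε₂ h ω ∂μ = 0)
    (hstar : Ω → Fin n) (hstar_meas : Measurable hstar)
    (hindep_sel : IndepFun (fun ω h => ε₂ h ω) hstar μ) :
    ∫ ω, (V (hstar ω) + ε₂ (hstar ω) ω) ∂μ ≤ ⨆ h, V h := by
  have hV : Integrable (fun ω ↦ V (hstar ω)) μ :=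
    integrable_eval_comp (X := fun h _ ↦ V h) (fun h ↦ integrable_const (V h)) hstar_meas
  have hnoise : ∫ ω, ε₂ (hstar ω) ω ∂μ = 0 := by
    simp [integral_eval_comp_of_indepFun hint₂ hstar_meas hindep_sel, hmean₂]
  rw [integral_add hV (integrable_eval_comp hint₂ hstar_meas), hnoise, add_zero]
  calc ∫ ω, V (hstar ω) ∂μ ≤ ∫ _, ⨆ h, V h ∂μ :=
        integral_mono hV (integrable_const _) fun ω ↦ le_ciSup (Set.finite_range V).bddAbove _
    _ = ⨆ h, V h := by simp

/-- Double-estimator scheme: selecting the argmax using noise from a first estimator and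
evaluating with independent zero-mean noise from a second estimator does not overestimate
the true maximum in expectation. -/
theorem double_estimator_no_overestimate
    {Ω : Type*} [MeasurableSpace Ω] (μ : Measure Ω) [IsProbabilityMeasure μ]
    (n : ℕ) (hn : 1 ≤ n) (V : Fin n → ℝ) (ε₁ ε₂ : Fin n → Ω → ℝ)
    (hmeas₁ : ∀ h, Measurable (ε₁ h)) (hmeas₂ : ∀ h, Measurable (ε₂ h))
    (hint₂ : ∀ h, Integrable (ε₂ h) μ)
    (hmean₂ : ∀ h, ∫ ω, ε₂ h ω ∂μ = 0)
    (hstar : Ω → Fin n) (hstar_meas : Measurable hstar)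
    (hargmax : ∀ ω h, V h + ε₁ h ω ≤ V (hstar ω) + ε₁ (hstar ω) ω)
    (hindep_fam : IndepFun (fun ω h => ε₂ h ω) (fun ω h => ε₁ h ω) μ)
    (hindep_sel : IndepFun (fun ω h => ε₂ h ω) hstar μ) :
    ∫ ω, (V (hstar ω) + ε₂ (hstar ω) ω) ∂μ ≤ ⨆ h, V h :=
  double_estimator_no_overestimate_general μ n V ε₂ hint₂ hmean₂ hstar hstar_meas hindep_sel
end

section
/- Fix a trajectory with rewards $r_t, r_{t+1}, \ldots, r_T$ and true action-values $Q^\pi(s_{t+h}, a_{t+h})$. Given estimators $\tilde{Q}^{(1)}_h = Q^\pi(s_{t+h},a_{t+h}) + \epsilon^{(1)}_h$ and $\tilde{Q}^{(2)}_h = Q^\pi(s_{t+h},a_{t+h}) + \epsilon^{(2)}_h$ with independent zero-mean noises, define $V^{(i)}_h = \sum_{j=0}^{h-1} \gamma^j r_{t+j} + \gamma^h \tilde{Q}^{(i)}_h$, $h^*_{(1)} = \operatorname{argmax}_h V^{(1)}_h$, and $R^{(1)}_t = V^{(2)}_{h^*_{(1)}}$. Then $\mathbb{E}[R^{(1)}_t]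 \leq \max_h \left( \sum_{j=0}^{h-1} \gamma^j r_{t+j} + \gamma^h Q^\pi(s_{t+h},a_{t+h}) \right)$. -/
/-!
Write `V⁽²⁾_h = A_h + γ^h ε⁽²⁾_h`, where `A_h` is the noiseless `h`-step return. The selected
index `h*` is independent of the second noise family, so on each event `{h* = h}` the noise
`ε⁽²⁾_h` still has mean zero and contributes nothing to the expectation. What remains is
`𝔼[A_{h*}]`, an average of the `A_h`, hence at most their maximum.
-/

open MeasureTheory ProbabilityTheory Finset

theorem sum_indicator_preimage_singleton {Ω ι E : Type*} [Fintype ι] [AddCommMonoid E]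
    (σ : Ω → ι) (X : ι → Ω → E) (ω : Ω) :
    ∑ i, (σ ⁻¹' {i}).indicator (X i) ω = X (σ ω) ω := by
  classical
  simp [Set.indicator_apply]

section Selection

variable {Ω ι : Type*} [MeasurableSpace Ω] {μ : Measure Ω}
  [Fintype ι] [MeasurableSpace ι] [MeasurableSingletonClass ι] {σ : Ω → ι}

theorem integrable_selected {E : Type*} [NormedAddCommGroup E] {X : ι → Ω → E}
    (hσ : Measurable σ) (hX : ∀ i, Integrable (X i) μ) :
    Integrable (fun ω => X (σ ω) ω) μ := by
  simp_rw [← sum_indicator_preimage_singleton σ X]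
  exact integrable_finsetSum _ fun i _ => (hX i).indicator (hσ (measurableSet_singleton i))

theorem integral_selected_eq_sum {E : Type*} [NormedAddCommGroup E] [NormedSpace ℝ E]
    {X : ι → Ω → E} (hσ : Measurable σ) (hX : ∀ i, Integrable (X i) μ) :
    ∫ ω, X (σ ω) ω ∂μ = ∑ i, ∫ ω in σ ⁻¹' {i}, X i ω ∂μ := by
  simp_rw [← sum_indicator_preimage_singleton σ X]
  rw [integral_finsetSum _ fun i _ => (hX i).indicator (hσ (measurableSet_singleton i))]
  exact Finset.sum_congr rfl fun i _ => integral_indicator (hσ (measurableSet_singleton i))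

theorem integral_selected_eq_zero_of_indepFun {X : ι → Ω → ℝ} (hσ : Measurable σ)
    (hX : ∀ i, Integrable (X i) μ) (hmean : ∀ i, ∫ ω, X i ω ∂μ = 0)
    (hindep : ∀ i, IndepFun (X i) σ μ) : ∫ ω, X (σ ω) ω ∂μ = 0 := by
  rw [integral_selected_eq_sum hσ hX]
  refine Finset.sum_eq_zero fun i _ => ?_
  have hsplit := Indep.setIntegral_eq_mul (f := id) hσ.comap_le
    ((IndepFun_iff_Indep _ _ _).mp (hindep i).symm) (hX i).aemeasurable
    ⟨{i}, measurableSet_singleton i, rfl⟩ aestronglyMeasurable_id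
  simpa [hmean i] using hsplit

theorem integral_comp_le_ciSup [IsProbabilityMeasure μ] (hσ : Measurable σ) (f : ι → ℝ) :
    ∫ ω, f (σ ω) ∂μ ≤ ⨆ i, f i :=
  calc ∫ ω, f (σ ω) ∂μ ≤ ∫ _, ⨆ i, f i ∂μ :=
        integral_mono (integrable_selected (X := fun i _ => f i) hσ fun i => integrable_const _)
          (integrable_const _) fun ω => le_ciSup (Set.finite_range f).bddAbove (σ ω)
    _ = ⨆ i, f i := by simp

end Selection

theorem twin_backpropagation_no_overestimate_general
    {Ω : Type*} [MeasurableSpace Ω] (μ : Measure Ω) [IsProbabilityMeasure μ]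
    (H : ℕ) (γ : ℝ)
    (r : ℕ → ℝ) (q : ℕ → ℝ)  -- rewards r_{t+j} and true values Q^π(s_{t+h}, a_{t+h})
    (ε₂ : ℕ → Ω → ℝ)
    (hint₂ : ∀ h, Integrable (ε₂ h) μ)
    (hmean₂ : ∀ h, ∫ ω, ε₂ h ω ∂μ = 0)
    -- V^{(i)}_h(ω) = ∑_{j<h} γ^j r_j + γ^h (q h + εᵢ h ω)
    (V₂ : Fin (H + 1) → Ω → ℝ)
    (hV₂ : ∀ (h : Fin (H + 1)) ω,
      V₂ h ω = (∑ j ∈ range h.val, γ ^ j * r j) + γ ^ h.val * (q h.val + ε₂ h.val ω))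
    (hstar : Ω → Fin (H + 1)) (hstar_meas : Measurable hstar)
    (hindep_sel : IndepFun (fun ω (h : ℕ) => ε₂ h ω) hstar μ) :
    ∫ ω, V₂ (hstar ω) ω ∂μ ≤
      ⨆ h : Fin (H + 1), ((∑ j ∈ range h.val, γ ^ j * r j) + γ ^ h.val * q h.val) := by
  set A : Fin (H + 1) → ℝ := fun h => (∑ j ∈ range h.val, γ ^ j * r j) + γ ^ h.val * q h.val
  set e : Fin (H + 1) → Ω → ℝ := fun h ω => γ ^ h.val * ε₂ h.val ω
  have he_int : ∀ h, Integrable (e h) μ := fun h => (hint₂ h).const_mul _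
  have he_mean : ∀ h, ∫ ω, e h ω ∂μ = 0 := fun h => by simp [e, integral_const_mul, hmean₂]
  have he_indep : ∀ h, IndepFun (e h) hstar μ := fun h =>
    hindep_sel.comp (φ := fun f : ℕ → ℝ => γ ^ h.val * f h.val) (by fun_prop) measurable_id
  have hsplit : ∀ ω, V₂ (hstar ω) ω = A (hstar ω) + e (hstar ω) ω := fun ω => by
    rw [hV₂]; ring
  calc ∫ ω, V₂ (hstar ω) ω ∂μ = ∫ ω, A (hstar ω) ∂μ + ∫ ω, e (hstar ω) ω ∂μ := by
        simp_rw [hsplit]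
        exact integral_add
          (integrable_selected (X := fun h _ => A h) hstar_meas fun h => integrable_const _)
          (integrable_selected hstar_meas he_int)
    _ = ∫ ω, A (hstar ω) ∂μ := by
        rw [integral_selected_eq_zero_of_indepFun hstar_meas he_int he_mean he_indep, add_zero]
    _ ≤ ⨆ h, A h := integral_comp_le_ciSup hstar_meas A

/-- Theorem 1 (GEM): the twin back-propagation target does not overestimate the best
multi-step return along a fixed trajectory, given unbiased independent estimators. -/
theorem twin_backpropagation_no_overestimate
    {Ω : Type*} [MeasurableSpace Ω] (μ : Measure Ω) [IsProbabilityMeasure μ]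
    (H : ℕ) (γ : ℝ) (hγ0 : 0 ≤ γ) (hγ1 : γ < 1)
    (r : ℕ → ℝ) (q : ℕ → ℝ)  -- rewards r_{t+j} and true values Q^π(s_{t+h}, a_{t+h})
    (ε₁ ε₂ : ℕ → Ω → ℝ)
    (hmeas₁ : ∀ h, Measurable (ε₁ h)) (hmeas₂ : ∀ h, Measurable (ε₂ h))
    (hint₁ : ∀ h, Integrable (ε₁ h) μ) (hint₂ : ∀ h, Integrable (ε₂ h) μ)
    (hmean₁ : ∀ h, ∫ ω, ε₁ h ω ∂μ = 0) (hmean₂ : ∀ h, ∫ ω, ε₂ h ω ∂μ = 0)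
    -- V^{(i)}_h(ω) = ∑_{j<h} γ^j r_j + γ^h (q h + εᵢ h ω)
    (V₁ V₂ : Fin (H + 1) → Ω → ℝ)
    (hV₁ : ∀ (h : Fin (H + 1)) ω,
      V₁ h ω = (∑ j ∈ range h.val, γ ^ j * r j) + γ ^ h.val * (q h.val + ε₁ h.val ω))
    (hV₂ : ∀ (h : Fin (H + 1)) ω,
      V₂ h ω = (∑ j ∈ range h.val, γ ^ j * r j) + γ ^ h.val * (q h.val + ε₂ h.val ω))
    (hstar : Ω → Fin (H + 1)) (hstar_meas : Measurable hstar)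
    (hargmax : ∀ ω h, V₁ h ω ≤ V₁ (hstar ω) ω)
    (hindep_fam : IndepFun (fun ω h => ε₂ h ω) (fun ω h => ε₁ h ω) μ)
    (hindep_sel : IndepFun (fun ω (h : ℕ) => ε₂ h ω) hstar μ) :
    ∫ ω, V₂ (hstar ω) ω ∂μ ≤
      ⨆ h : Fin (H + 1), ((∑ j ∈ range h.val, γ ^ j * r j) + γ ^ h.val * q h.val) :=
  twin_backpropagation_no_overestimate_general μ H γ r q ε₂ hint₂ hmean₂ V₂ hV₂ hstar hstar_meas
    hindep_sel
end

section
/- In a finite MDP with deterministic transitions, the GEM backup target operator is a $\gamma$-contraction around $Q^*$: for any value function $Q: \mathcal{S} \times \mathcal{A} \to \mathbb{R}$ and any state-action pair $(s_t, a_t)$ with trajectory generated by following deterministic transitions and a greedy evaluation action, the multi-step target $R_t = \max_{0 \le h \le T-t} \left( \sum_{i=0}^{h} \gamma^i r_{t+i} + \gamma^{h+1} Q(s_{t+h+1}, \pi(s_{t+h+1})) \right)$ (with $Q$-term omitted at $h = T-t$, and $\pi(s) = \operatorname{argmax}_a Q(s,a)$) satisfies $|R_t - Q^*(s_t, a_t)|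 \leq \gamma \|Q - Q^*\|_\infty$, provided the rewards and trajectory are generated by the deterministic transition function and the terminal condition holds ($Q^*(s_T, a) $ accounts for episode end). -/
open Finset

/-- In a finite deterministic MDP, the GEM multi-step backup target is a γ-contraction
around `Q*`. -/
theorem gem_target_contraction
    {S A : Type*} [Fintype S] [Fintype A] [Nonempty S] [Nonempty A]
    (f : S → A → S) (r : S → A → ℝ) (γ : ℝ) (hγ0 : 0 ≤ γ) (hγ1 : γ < 1)
    (Qstar : S → A → ℝ)
    (hBellman : ∀ s a, Qstar s a = r s a + γ * ⨆ a', Qstar (f s a) a')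
    (Q : S → A → ℝ) (π : S → A)
    (hgreedy : ∀ s, Q s (π s) = ⨆ a, Q s a)
    -- a trajectory following the deterministic dynamics from (s 0, a 0)
    (s : ℕ → S) (a : ℕ → A)
    (htraj : ∀ i, s (i + 1) = f (s i) (a i))
    (R : ℝ)
    (hR : R = ⨆ h : ℕ,
      ((∑ i ∈ range (h + 1), γ ^ i * r (s i) (a i)) + γ ^ (h + 1) * Q (s (h + 1)) (π (s (h + 1))))) :
    |R - Qstar (s 0) (a 0)| ≤ γ * ⨆ p : S × A, |Q p.1 p.2 - Qstar p.1 p.2| := by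
  set ε := ⨆ p : S × A, |Q p.1 p.2 - Qstar p.1 p.2| with hεdef
  set V : S → ℝ := fun st => ⨆ a', Qstar st a' with hVdef
  have hε : ∀ st b, |Q st b - Qstar st b| ≤ ε := fun st b =>
    le_ciSup (f := fun p : S × A => |Q p.1 p.2 - Qstar p.1 p.2|) (Finite.bddAbove_range _) (st, b)
  have hε0 : 0 ≤ ε := le_trans (abs_nonneg _) (hε (Classical.arbitrary S) (Classical.arbitrary A))
  -- sup comparisons
  have hQupper : ∀ st, Q st (π st) ≤ V st + ε := by
    intro st
    rw [hgreedy]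
    refine ciSup_le fun b => ?_
    have h1 := (abs_le.1 (hε st b)).2
    have h2 : Qstar st b ≤ V st := le_ciSup (Finite.bddAbove_range _) b
    linarith
  have hQlower : ∀ st, V st - ε ≤ Q st (π st) := by
    intro st
    rw [hgreedy]
    have : V st ≤ (⨆ b, Q st b) + ε := by
      refine ciSup_le fun b => ?_
      have h1 := (abs_le.1 (hε st b)).1
      have h2 : Q st b ≤ ⨆ b', Q st b' := le_ciSup (Finite.bddAbove_range _) b
      linarith
    linarith
  -- the optimal-value version of the partial returns
  set g : ℕ → ℝ := fun h => ∑ i ∈ range (h + 1), γ ^ i * r (s i) (a i) with hgdef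
  have hQsV : ∀ i, Qstar (s i) (a i) = r (s i) (a i) + γ * V (s (i + 1)) := by
    intro i
    rw [hBellman, htraj]
  have hGstar : ∀ h, g h + γ ^ (h + 1) * V (s (h + 1)) ≤ Qstar (s 0) (a 0) := by
    intro h
    induction h with
    | zero =>
      have hg0 : g 0 = r (s 0) (a 0) := by simp [hgdef]
      rw [hg0, hQsV 0, pow_one]
    | succ n ih =>
      have hsum : g (n + 1) = g n + γ ^ (n + 1) * r (s (n + 1)) (a (n + 1)) := by
        simp [hgdef, Finset.sum_range_succ]
      have hkey : γ ^ (n + 1) * r (s (n + 1)) (a (n + 1)) + γ ^ (n + 2) * V (s (n + 2))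
          = γ ^ (n + 1) * Qstar (s (n + 1)) (a (n + 1)) := by
        rw [hQsV (n + 1)]; ring
      have hVle : Qstar (s (n + 1)) (a (n + 1)) ≤ V (s (n + 1)) :=
        le_ciSup (Finite.bddAbove_range _) (a (n + 1))
      have hpow : (0:ℝ) ≤ γ ^ (n + 1) := pow_nonneg hγ0 _
      have := mul_le_mul_of_nonneg_left hVle hpow
      calc g (n + 1) + γ ^ (n + 2) * V (s (n + 2))
          = g n + (γ ^ (n + 1) * r (s (n + 1)) (a (n + 1)) + γ ^ (n + 2) * V (s (n + 2))) := by
            rw [hsum]; ring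
        _ = g n + γ ^ (n + 1) * Qstar (s (n + 1)) (a (n + 1)) := by rw [hkey]
        _ ≤ g n + γ ^ (n + 1) * V (s (n + 1)) := by linarith
        _ ≤ Qstar (s 0) (a 0) := ih
  -- upper bound for each term of the sup defining R
  set G : ℕ → ℝ := fun h => g h + γ ^ (h + 1) * Q (s (h + 1)) (π (s (h + 1))) with hGdef
  have hub : ∀ h, G h ≤ Qstar (s 0) (a 0) + γ * ε := by
    intro h
    have hpow : (0:ℝ) ≤ γ ^ (h + 1) := pow_nonneg hγ0 _
    have h1 : Q (s (h + 1)) (π (s (h + 1))) ≤ V (s (h + 1)) + ε := hQupper _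
    have h2 : γ ^ (h + 1) * Q (s (h + 1)) (π (s (h + 1)))
        ≤ γ ^ (h + 1) * V (s (h + 1)) + γ ^ (h + 1) * ε := by
      have := mul_le_mul_of_nonneg_left h1 hpow
      linarith [this]
    have h3 : γ ^ (h + 1) * ε ≤ γ * ε := by
      have : γ ^ (h + 1) ≤ γ := by
        calc γ ^ (h + 1) = γ * γ ^ h := by ring
          _ ≤ γ * 1 := mul_le_mul_of_nonneg_left (pow_le_one₀ hγ0 hγ1.le) hγ0
          _ = γ := mul_one γ
      exact mul_le_mul_of_nonneg_right this hε0
    have := hGstar h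
    simp only [hGdef]
    linarith
  have hRle : R ≤ Qstar (s 0) (a 0) + γ * ε := by
    rw [hR]; exact ciSup_le hub
  have hbdd : BddAbove (Set.range G) :=
    ⟨Qstar (s 0) (a 0) + γ * ε, by rintro x ⟨h, rfl⟩; exact hub h⟩
  have hRge : Qstar (s 0) (a 0) - γ * ε ≤ R := by
    have hG0 : Qstar (s 0) (a 0) - γ * ε ≤ G 0 := by
      have h1 : V (s 1) - ε ≤ Q (s 1) (π (s 1)) := hQlower _
      have h2 : γ * (V (s 1) - ε) ≤ γ * Q (s 1) (π (s 1)) :=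
        mul_le_mul_of_nonneg_left h1 hγ0
      have h3 : Qstar (s 0) (a 0) = r (s 0) (a 0) + γ * V (s 1) := hQsV 0
      simp only [hGdef, hgdef]
      simp [Finset.sum_range_one]
      nlinarith
    have : G 0 ≤ R := by rw [hR]; exact le_ciSup hbdd 0
    linarith
  rw [abs_le]
  constructor <;> linarith
end

section
/- In a nearly-deterministic MDP with parameter $\mu$ (i.e., $Q_{\max}(s,a) \leq Q^*(s,a) + \mu$ for all $(s,a)$), if a learned value function $\tilde{Q}$ satisfies $Q^*(s,a) \leq \tilde{Q}(s,a) \leq Q_{\max}(s,a)$ for all $(s,a)$, then the greedy policy $\tilde{\pi}$ with respect to $\tilde{Q}$ satisfies $V^{\tilde{\pi}}(s) \geq V^*(s) - \frac{2\mu}{1-\gamma}$ for all states $s$. -/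
open Finset

/-- Theorem 4 (GEM): in a nearly-deterministic MDP with parameter μ, a value function
sandwiched between `Q*` and `Q_max` yields a greedy policy whose value is within
`2μ/(1-γ)` of optimal. -/
theorem gem_near_deterministic_performance_bound
    {S A : Type*} [Fintype S] [Fintype A] [Nonempty S] [Nonempty A]
    (P : S → A → S → ℝ) (r : S → A → ℝ) (γ : ℝ) (hγ0 : 0 ≤ γ) (hγ1 : γ < 1)
    (hPpos : ∀ s a s', 0 ≤ P s a s') (hPsum : ∀ s a, ∑ s', P s a s' = 1)
    (Qstar : S → A → ℝ)
    (hBellman : ∀ s a, Qstar s a = r s a + γ * ∑ s', P s a s' * ⨆ a', Qstar s' a')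
    (Qmax : S → A → ℝ) (μ : ℝ)
    (hnear : ∀ s a, Qmax s a ≤ Qstar s a + μ)
    (Qtilde : S → A → ℝ)
    (hsandwich_lo : ∀ s a, Qstar s a ≤ Qtilde s a)
    (hsandwich_hi : ∀ s a, Qtilde s a ≤ Qmax s a)
    (πt : S → A) (hgreedy : ∀ s, Qtilde s (πt s) = ⨆ a, Qtilde s a)
    (Qpi : S → A → ℝ)
    (hBellmanPi : ∀ s a, Qpi s a = r s a + γ * ∑ s', P s a s' * Qpi s' (πt s')) :
    ∀ s : S, (⨆ a, Qstar s a) - 2 * μ / (1 - γ) ≤ Qpi s (πt s) := by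
  have hγ' : (0:ℝ) < 1 - γ := by linarith
  have hμ : 0 ≤ μ := by
    obtain ⟨s⟩ := (inferInstance : Nonempty S)
    obtain ⟨a⟩ := (inferInstance : Nonempty A)
    have h1 := hsandwich_lo s a
    have h2 := hsandwich_hi s a
    have h3 := hnear s a
    linarith
  set g : S → ℝ := fun s => (⨆ a, Qstar s a) - Qpi s (πt s) with hg
  have hbS : BddAbove (Set.range g) := (Set.finite_range g).bddAbove
  set D := ⨆ s, g s with hD
  have hgD : ∀ s, g s ≤ D := fun s => le_ciSup hbS s
  have key : ∀ s, g s ≤ μ + γ * D := by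
    intro s
    have h1 : (⨆ a, Qstar s a) ≤ Qtilde s (πt s) := by
      rw [hgreedy s]
      apply ciSup_le
      intro a
      exact le_trans (hsandwich_lo s a)
        (le_ciSup ((Set.finite_range _).bddAbove) a)
    have h2 : Qtilde s (πt s) ≤ Qstar s (πt s) + μ :=
      le_trans (hsandwich_hi s (πt s)) (hnear s (πt s))
    have h3 : Qstar s (πt s) - Qpi s (πt s) ≤ γ * D := by
      rw [hBellman s (πt s), hBellmanPi s (πt s)]
      have e : ∑ s', P s (πt s) s' * (⨆ a', Qstar s' a')
          - ∑ s', P s (πt s) s' * Qpi s' (πt s')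
          = ∑ s', P s (πt s) s' * ((⨆ a', Qstar s' a') - Qpi s' (πt s')) := by
        rw [← Finset.sum_sub_distrib]
        exact Finset.sum_congr rfl fun s' _ => (mul_sub _ _ _).symm
      have hsum : ∑ s', P s (πt s) s' * ((⨆ a', Qstar s' a') - Qpi s' (πt s')) ≤ D := by
        calc ∑ s', P s (πt s) s' * ((⨆ a', Qstar s' a') - Qpi s' (πt s'))
            ≤ ∑ s', P s (πt s) s' * D :=
              Finset.sum_le_sum fun s' _ =>
                mul_le_mul_of_nonneg_left (hgD s') (hPpos s (πt s) s')
          _ = D := by rw [← Finset.sum_mul, hPsum]; ring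
      have := mul_le_mul_of_nonneg_left (by linarith [e ▸ hsum] : ∑ s', P s (πt s) s' * (⨆ a', Qstar s' a') - ∑ s', P s (πt s) s' * Qpi s' (πt s') ≤ D) hγ0
      linarith
    have : g s = (⨆ a, Qstar s a) - Qpi s (πt s) := rfl
    linarith
  have hDle : D ≤ μ + γ * D := ciSup_le key
  have hDμ : D ≤ μ / (1 - γ) := by
    rw [le_div_iff₀ hγ']
    nlinarith
  intro s
  have h1 := hgD s
  have h2 : μ / (1 - γ) ≤ 2 * μ / (1 - γ) := by
    have hnn : 0 ≤ μ / (1 - γ) := div_nonneg hμ hγ'.le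
    have he : 2 * μ / (1 - γ) = μ / (1 - γ) + μ / (1 - γ) := by ring
    linarith
  have h3 : g s = (⨆ a, Qstar s a) - Qpi s (πt s) := rfl
  linarith
end

section
/- Let $(\Delta_t)$ be a sequence of real numbers with $\Delta_{t+1} = (1 - \alpha_t)\Delta_t + \alpha_t F_t$ where $\alpha_t \in [0,1]$, $\sum_t \alpha_t = \infty$, and $|F_t| \leq \kappa |\Delta_t| + c_t$ for some $\kappa \in [0,1)$ and $c_t \to 0$. Then $\Delta_t \to 0$. -/
open Filter

/-- Deterministic stochastic-approximation lemma: an iterate driven by κ-contracting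
updates with vanishing perturbation and step sizes summing to infinity converges to 0. -/
theorem deterministic_stochastic_approximation
    (Δ F α c : ℕ → ℝ) (κ : ℝ) (hκ0 : 0 ≤ κ) (hκ1 : κ < 1)
    (hα : ∀ t, α t ∈ Set.Icc (0 : ℝ) 1)
    (hαsum : ¬ Summable α)
    (hrec : ∀ t, Δ (t + 1) = (1 - α t) * Δ t + α t * F t)
    (hF : ∀ t, |F t| ≤ κ * |Δ t| + c t)
    (hc : Tendsto c atTop (nhds 0)) :
    Tendsto Δ atTop (nhds 0) := by
  have hκ' : 0 < 1 - κ := by linarith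
  have key : ∀ t, |Δ (t + 1)| ≤ (1 - (1 - κ) * α t) * |Δ t| + α t * c t := by
    intro t
    obtain ⟨h0, h1⟩ := hα t
    have hFt := hF t
    have habs : |Δ (t + 1)| ≤ (1 - α t) * |Δ t| + α t * |F t| := by
      rw [hrec t]
      refine (abs_add_le _ _).trans ?_
      rw [abs_mul, abs_mul, abs_of_nonneg (by linarith : (0:ℝ) ≤ 1 - α t),
        abs_of_nonneg h0]
    nlinarith [abs_nonneg (Δ t), abs_nonneg (F t)]
  rw [Metric.tendsto_atTop]
  intro ε hε
  have hε' : 0 < ε / 3 := by linarith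
  obtain ⟨T, hT⟩ := eventually_atTop.mp
    (hc.eventually_lt_const (show (0:ℝ) < (1 - κ) * (ε / 3) by positivity))
  set β : ℕ → ℝ := fun t => (1 - κ) * α t with hβdef
  have hβ0 : ∀ t, 0 ≤ β t := fun t => mul_nonneg hκ'.le (hα t).1
  have hβ1 : ∀ t, β t ≤ 1 := by
    intro t
    have h1 := (hα t).2
    have h0 := (hα t).1
    simp only [hβdef]
    nlinarith
  set P : ℕ → ℝ := fun n => ∏ t ∈ Finset.Ico T n, (1 - β t) with hPdef
  have hPnn : ∀ n, 0 ≤ P n := fun n =>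
    Finset.prod_nonneg fun t _ => by linarith [hβ1 t]
  have hind : ∀ n, T ≤ n → |Δ n| ≤ ε / 3 + P n * |Δ T| := by
    intro n hn
    induction n with
    | zero =>
      have hT0 : T = 0 := Nat.le_zero.mp hn
      subst hT0
      simp only [hPdef, Finset.Ico_self, Finset.prod_empty, one_mul]
      linarith
    | succ n ih =>
      rcases Nat.lt_or_ge T (n + 1) with h | h
      · have hn' : T ≤ n := Nat.lt_succ_iff.mp h
        have ih' := ih hn'
        have hcle : α n * c n ≤ β n * (ε / 3) := by
          have hc1 : c n < (1 - κ) * (ε / 3) := hT n hn'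
          have h0 := (hα n).1
          calc α n * c n ≤ α n * ((1 - κ) * (ε / 3)) :=
                mul_le_mul_of_nonneg_left hc1.le h0
            _ = β n * (ε / 3) := by simp only [hβdef]; ring
        have hkey := key n
        have hPstep : P (n + 1) = P n * (1 - β n) := by
          simp only [hPdef]
          rw [Finset.prod_Ico_succ_top hn']
        have hfac : 0 ≤ 1 - β n := by linarith [hβ1 n]
        have hstep : |Δ (n + 1)| ≤ (1 - β n) * |Δ n| + β n * (ε / 3) := by
          have heq : (1 - (1 - κ) * α n) * |Δ n| = (1 - β n) * |Δ n| := by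
            simp only [hβdef]
          linarith [hkey, hcle, heq ▸ hkey]
        calc |Δ (n + 1)| ≤ (1 - β n) * |Δ n| + β n * (ε / 3) := hstep
          _ ≤ (1 - β n) * (ε / 3 + P n * |Δ T|) + β n * (ε / 3) := by
              nlinarith [mul_le_mul_of_nonneg_left ih' hfac]
          _ = ε / 3 + P (n + 1) * |Δ T| := by rw [hPstep]; ring
      · have hTe : T = n + 1 := le_antisymm hn h
        simp only [hPdef, hTe, Finset.Ico_self, Finset.prod_empty, one_mul]
        linarith
  have hS : Tendsto (fun n => ∑ t ∈ Finset.range n, α t) atTop atTop :=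
    (not_summable_iff_tendsto_nat_atTop_of_nonneg (fun t => (hα t).1)).mp hαsum
  have hPle : ∀ n, P n ≤ Real.exp (-(∑ t ∈ Finset.Ico T n, β t)) := by
    intro n
    have : Real.exp (-(∑ t ∈ Finset.Ico T n, β t)) =
        ∏ t ∈ Finset.Ico T n, Real.exp (-β t) := by
      rw [← Real.exp_sum, Finset.sum_neg_distrib]
    rw [this]
    refine Finset.prod_le_prod (fun t _ => by linarith [hβ1 t]) fun t _ => ?_
    have := Real.add_one_le_exp (-β t)
    linarith
  have hsum : Tendsto (fun n => ∑ t ∈ Finset.Ico T n, β t) atTop atTop := by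
    have h1 : Tendsto (fun n => (1 - κ) *
        (∑ t ∈ Finset.range n, α t - ∑ t ∈ Finset.range T, α t)) atTop atTop :=
      (tendsto_atTop_add_const_right _ (-(∑ t ∈ Finset.range T, α t))
        hS).const_mul_atTop hκ' |>.congr (fun n => by ring)
    refine h1.congr' ?_
    filter_upwards [eventually_ge_atTop T] with n hn
    rw [Finset.sum_Ico_eq_sub _ hn]
    simp only [hβdef]
    rw [mul_sub, Finset.mul_sum, Finset.mul_sum]
  have hPz : Tendsto P atTop (nhds 0) := by
    refine squeeze_zero hPnn hPle ?_
    have := Real.tendsto_exp_atBot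
    exact this.comp (tendsto_neg_atBot_iff.mpr hsum)
  have hPz' : Tendsto (fun n => P n * |Δ T|) atTop (nhds 0) := by
    simpa using hPz.mul_const |Δ T|
  obtain ⟨N, hN⟩ := eventually_atTop.mp (hPz'.eventually_lt_const hε')
  refine ⟨max T N, fun n hn => ?_⟩
  have h1 := hind n (le_trans (le_max_left _ _) hn)
  have h2 := hN n (le_trans (le_max_right _ _) hn)
  rw [Real.dist_eq, sub_zero]
  linarith
end

section
/- Fix $\gamma \in [0,1)$, rewards $r_0, \ldots, r_{T}$, true values $q^*_1, \ldots, q^*_{T+1}$ satisfying the one-step consistency $q^*_h = r_h + \gamma q^*_{h+1}$ for $1 \le h \le T$ (with $q^*_{T+1} = 0$), and estimates $\tilde{q}_1, \ldots, \tilde{q}_{T+1}$ with $\tilde{q}_{T+1} = 0$. Then the multi-step target $R = \max_{1 \le h \le T+1} \left( \sum_{i=0}^{h-1} \gamma^i r_i + \gamma^h \tilde{q}_h \right)$ satisfies $|R - q^*_0| \leq \gamma \max_{1 \le h \le T+1} |\tilde{q}_h - q^*_h|$, where $q^*_0 = r_0 + \gamma q^*_1$. -/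
open Finset

lemma gem_sum_eq
    (γ : ℝ) (T : ℕ) (r qstar : ℕ → ℝ)
    (hconsist : ∀ h, 1 ≤ h → h ≤ T → qstar h = r h + γ * qstar (h + 1)) :
    ∀ h, 1 ≤ h → h ≤ T + 1 →
      (∑ i ∈ range h, γ ^ i * r i) + γ ^ h * qstar h = r 0 + γ * qstar 1 := by
  intro h
  induction h with
  | zero => intro h1 _; omega
  | succ n ih =>
    intro _ hle
    rcases Nat.eq_zero_or_pos n with hn | hn
    · subst hn; simp
    · have h1 : 1 ≤ n := hn
      have h2 : n ≤ T := by omega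
      rw [Finset.sum_range_succ, hconsist n h1 h2] at *
      have := ih h1 (by omega)
      rw [← this]
      ring

/-- Trajectory contraction bound (key step of Theorem 2, GEM): along a trajectory whose
true values satisfy one-step Bellman consistency, the max-over-horizons backup target
deviates from the true value by at most γ times the worst later estimation error. -/
theorem gem_trajectory_contraction
    (γ : ℝ) (hγ0 : 0 ≤ γ) (hγ1 : γ < 1) (T : ℕ)
    (r qstar qt : ℕ → ℝ)
    (hconsist : ∀ h, 1 ≤ h → h ≤ T → qstar h = r h + γ * qstar (h + 1))
    (hqstarT : qstar (T + 1) = 0) (hqtT : qt (T + 1) = 0)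
    (R : ℝ)
    (hR : R = ⨆ h : Fin (T + 1),
      ((∑ i ∈ range (h.val + 1), γ ^ i * r i) + γ ^ (h.val + 1) * qt (h.val + 1))) :
    |R - (r 0 + γ * qstar 1)| ≤
      γ * ⨆ h : Fin (T + 1), |qt (h.val + 1) - qstar (h.val + 1)| := by
  set q0 := r 0 + γ * qstar 1 with hq0
  set f : Fin (T + 1) → ℝ := fun h =>
    (∑ i ∈ range (h.val + 1), γ ^ i * r i) + γ ^ (h.val + 1) * qt (h.val + 1) with hf
  set g : Fin (T + 1) → ℝ := fun h => |qt (h.val + 1) - qstar (h.val + 1)| with hg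
  set E := ⨆ h, g h with hE
  have hbddg : BddAbove (Set.range g) := (Set.finite_range g).bddAbove
  have hbddf : BddAbove (Set.range f) := (Set.finite_range f).bddAbove
  have hgE : ∀ h, g h ≤ E := fun h => le_ciSup hbddg h
  have hE0 : 0 ≤ E := le_trans (abs_nonneg _) (hgE ⟨0, by omega⟩)
  have hfe : ∀ h : Fin (T + 1),
      f h = q0 + γ ^ (h.val + 1) * (qt (h.val + 1) - qstar (h.val + 1)) := by
    intro h
    have := gem_sum_eq γ T r qstar hconsist (h.val + 1) (by omega) (by omega)
    simp only [hf]
    rw [hq0, ← this]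
    ring
  have hpow : ∀ h : Fin (T + 1), γ ^ (h.val + 1) ≤ γ := by
    intro h
    calc γ ^ (h.val + 1) ≤ γ ^ 1 :=
      pow_le_pow_of_le_one hγ0 hγ1.le (by omega)
    _ = γ := pow_one γ
  have hkey : ∀ h : Fin (T + 1), |f h - q0| ≤ γ * E := by
    intro h
    rw [hfe h]
    have h1 : q0 + γ ^ (h.val + 1) * (qt (h.val + 1) - qstar (h.val + 1)) - q0
        = γ ^ (h.val + 1) * (qt (h.val + 1) - qstar (h.val + 1)) := by ring
    rw [h1, abs_mul, abs_of_nonneg (pow_nonneg hγ0 (h.val + 1))]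
    exact mul_le_mul (hpow h) (hgE h) (abs_nonneg _) hγ0
  rw [abs_sub_le_iff]
  constructor
  · rw [sub_le_iff_le_add, hR]
    apply ciSup_le
    intro h
    have := (abs_sub_le_iff.mp (hkey h)).1
    linarith
  · rw [sub_le_iff_le_add, hR]
    have hle : f ⟨0, by omega⟩ ≤ ⨆ h, f h := le_ciSup hbddf _
    have := (abs_sub_le_iff.mp (hkey ⟨0, by omega⟩)).2
    linarith
end

section
/- With the same setup as the trajectory contraction bound (rewards $r_i$, consistent true values $q^*_h$ with $q^*_h = r_h + \gamma q^*_{h+1}$, estimates $\tilde{q}_h$), if additionally $\tilde{q}_h \geq q^*_h$ for all $h$, then the multi-step target $R = \max_{1 \le h \le T+1}(\sum_{i=0}^{h-1}\gamma^i r_i + \gamma^h \tilde{q}_h)$ satisfies $q^*_0 \leq R \leq q^*_0 + \gamma \max_h (\tilde{q}_h - q^*_h)$, i.e., the positive part of the error contracts: $(R - q^*_0)_+ \leq \gamma \max_h (\tilde{q}_h - q^*_h)_+$. -/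
open Finset

lemma gem_telescope (γ : ℝ) (T : ℕ) (r qstar : ℕ → ℝ)
    (hconsist : ∀ h, 1 ≤ h → h ≤ T → qstar h = r h + γ * qstar (h + 1)) :
    ∀ h, h ≤ T → (∑ i ∈ range (h + 1), γ ^ i * r i) + γ ^ (h + 1) * qstar (h + 1)
      = r 0 + γ * qstar 1 := by
  intro h
  induction h with
  | zero => intro _; simp
  | succ n ih =>
    intro hn
    have h1 : n ≤ T := Nat.le_of_succ_le hn
    rw [Finset.sum_range_succ]
    have hc := hconsist (n + 1) (Nat.le_add_left 1 n) hn
    have := ih h1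
    rw [← this, hc]
    ring

/-- One-sided trajectory contraction (Lemma 3, GEM): if the estimates dominate the true
values, the multi-step target stays above the true value and its overestimation error
contracts by γ. -/
theorem gem_trajectory_one_sided_contraction
    (γ : ℝ) (hγ0 : 0 ≤ γ) (hγ1 : γ < 1) (T : ℕ)
    (r qstar qt : ℕ → ℝ)
    (hconsist : ∀ h, 1 ≤ h → h ≤ T → qstar h = r h + γ * qstar (h + 1))
    (hqstarT : qstar (T + 1) = 0) (hqtT : qt (T + 1) = 0)
    (hge : ∀ h, 1 ≤ h → h ≤ T + 1 → qstar h ≤ qt h)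
    (R : ℝ)
    (hR : R = ⨆ h : Fin (T + 1),
      ((∑ i ∈ range (h.val + 1), γ ^ i * r i) + γ ^ (h.val + 1) * qt (h.val + 1))) :
    (r 0 + γ * qstar 1) ≤ R ∧
      R ≤ (r 0 + γ * qstar 1) +
        γ * ⨆ h : Fin (T + 1), (qt (h.val + 1) - qstar (h.val + 1)) := by
  have htel := gem_telescope γ T r qstar hconsist
  have hbdd1 : BddAbove (Set.range fun h : Fin (T + 1) =>
      ((∑ i ∈ range (h.val + 1), γ ^ i * r i) + γ ^ (h.val + 1) * qt (h.val + 1))) :=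
    Set.Finite.bddAbove (Set.finite_range _)
  have hbdd2 : BddAbove (Set.range fun h : Fin (T + 1) =>
      (qt (h.val + 1) - qstar (h.val + 1))) :=
    Set.Finite.bddAbove (Set.finite_range _)
  constructor
  · rw [hR]
    have := le_ciSup hbdd1 (⟨T, Nat.lt_succ_self T⟩ : Fin (T + 1))
    refine le_trans ?_ this
    simp only
    rw [hqtT]
    have := htel T le_rfl
    rw [hqstarT] at this
    linarith [this]
  · rw [hR]
    apply ciSup_le
    intro h
    have hh : h.val ≤ T := Nat.lt_succ_iff.mp h.isLt
    have htel' := htel h.val hh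
    have herr : qstar (h.val + 1) ≤ qt (h.val + 1) :=
      hge (h.val + 1) (Nat.le_add_left 1 _) (by omega)
    have hsup : qt (h.val + 1) - qstar (h.val + 1) ≤
        ⨆ h : Fin (T + 1), (qt (h.val + 1) - qstar (h.val + 1)) := le_ciSup hbdd2 h
    have hpow : γ ^ (h.val + 1) * (qt (h.val + 1) - qstar (h.val + 1)) ≤
        γ * (qt (h.val + 1) - qstar (h.val + 1)) := by
      apply mul_le_mul_of_nonneg_right _ (by linarith)
      calc γ ^ (h.val + 1) = γ * γ ^ h.val := by ring
        _ ≤ γ * 1 := by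
            apply mul_le_mul_of_nonneg_left _ hγ0
            exact pow_le_one₀ hγ0 hγ1.le
        _ = γ := mul_one γ
    have hmul : γ * (qt (h.val + 1) - qstar (h.val + 1)) ≤
        γ * ⨆ h : Fin (T + 1), (qt (h.val + 1) - qstar (h.val + 1)) :=
      mul_le_mul_of_nonneg_left hsup hγ0
    nlinarith [htel', hpow, hmul]
end

section
/- Let $\gamma \in [0,1)$. For fixed rewards $r_0, \ldots, r_T$ and two estimate sequences $p_h, q_h$ ($1 \le h \le T+1$, $p_{T+1} = q_{T+1} = 0$), define $h^*_p = \operatorname{argmax}_h(\sum_{i<h}\gamma^i r_i + \gamma^h p_h)$, $h^*_q = \operatorname{argmax}_h(\sum_{i<h}\gamma^i r_i + \gamma^h q_h)$, $R^{(1)} = \sum_{i < h^*_p}\gamma^i r_i + \gamma^{h^*_p} q_{h^*_p}$, and $R^{(2)} = \sum_{i < h^*_q}\gamma^i r_i + \gamma^{h^*_q} p_{h^*_q}$. Then $|R^{(1)} - R^{(2)}| \leq \gamma \max_h |p_h - q_h|$. -/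
open Finset

/-- The cross-evaluated twin targets (one estimator selects the horizon, the other
evaluates it) differ by at most γ times the sup difference of the two estimate
sequences. -/
theorem gem_twin_targets_close
    (γ : ℝ) (hγ0 : 0 ≤ γ) (hγ1 : γ < 1) (T : ℕ)
    (r p q : ℕ → ℝ) (hpT : p (T + 1) = 0) (hqT : q (T + 1) = 0)
    (hstarp hstarq : Fin (T + 1))
    (hargp : ∀ h : Fin (T + 1),
      (∑ i ∈ range (h.val + 1), γ ^ i * r i) + γ ^ (h.val + 1) * p (h.val + 1) ≤
      (∑ i ∈ range (hstarp.val + 1), γ ^ i * r i) + γ ^ (hstarp.val + 1) * p (hstarp.val + 1))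
    (hargq : ∀ h : Fin (T + 1),
      (∑ i ∈ range (h.val + 1), γ ^ i * r i) + γ ^ (h.val + 1) * q (h.val + 1) ≤
      (∑ i ∈ range (hstarq.val + 1), γ ^ i * r i) + γ ^ (hstarq.val + 1) * q (hstarq.val + 1))
    (R₁ R₂ : ℝ)
    (hR₁ : R₁ = (∑ i ∈ range (hstarp.val + 1), γ ^ i * r i) +
      γ ^ (hstarp.val + 1) * q (hstarp.val + 1))
    (hR₂ : R₂ = (∑ i ∈ range (hstarq.val + 1), γ ^ i * r i) +
      γ ^ (hstarq.val + 1) * p (hstarq.val + 1)) :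
    |R₁ - R₂| ≤ γ * ⨆ h : Fin (T + 1), |p (h.val + 1) - q (h.val + 1)| := by
  set M : ℝ := ⨆ h : Fin (T + 1), |p (h.val + 1) - q (h.val + 1)| with hM
  have hbdd : BddAbove (Set.range fun h : Fin (T + 1) =>
      |p (h.val + 1) - q (h.val + 1)|) := Set.Finite.bddAbove (Set.finite_range _)
  have hle : ∀ h : Fin (T + 1), |p (h.val + 1) - q (h.val + 1)| ≤ M :=
    fun h => le_ciSup hbdd h
  have hM0 : 0 ≤ M := le_trans (abs_nonneg _) (hle hstarp)
  have hpow : ∀ k : ℕ, ∀ x : ℝ, γ ^ (k + 1) * |x| ≤ γ * |x| := by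
    intro k x
    have h1 : γ ^ (k + 1) ≤ γ := by
      calc γ ^ (k + 1) = γ * γ ^ k := by ring
        _ ≤ γ * 1 := by
            exact mul_le_mul_of_nonneg_left (pow_le_one₀ hγ0 hγ1.le) hγ0
        _ = γ := by ring
    exact mul_le_mul_of_nonneg_right h1 (abs_nonneg x)
  rw [abs_sub_le_iff]
  constructor
  · have h := hargq hstarp
    have : R₁ - R₂ ≤ γ ^ (hstarq.val + 1) * (q (hstarq.val + 1) - p (hstarq.val + 1)) := by
      rw [hR₁, hR₂]; nlinarith
    calc R₁ - R₂ ≤ γ ^ (hstarq.val + 1) * (q (hstarq.val + 1) - p (hstarq.val + 1)) := this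
      _ ≤ γ ^ (hstarq.val + 1) * |q (hstarq.val + 1) - p (hstarq.val + 1)| :=
          mul_le_mul_of_nonneg_left (le_abs_self _) (pow_nonneg hγ0 _)
      _ ≤ γ * |q (hstarq.val + 1) - p (hstarq.val + 1)| := hpow _ _
      _ = γ * |p (hstarq.val + 1) - q (hstarq.val + 1)| := by rw [abs_sub_comm]
      _ ≤ γ * M := mul_le_mul_of_nonneg_left (hle hstarq) hγ0
  · have h := hargp hstarq
    have : R₂ - R₁ ≤ γ ^ (hstarp.val + 1) * (p (hstarp.val + 1) - q (hstarp.val + 1)) := by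
      rw [hR₁, hR₂]; nlinarith
    calc R₂ - R₁ ≤ γ ^ (hstarp.val + 1) * (p (hstarp.val + 1) - q (hstarp.val + 1)) := this
      _ ≤ γ ^ (hstarp.val + 1) * |p (hstarp.val + 1) - q (hstarp.val + 1)| :=
          mul_le_mul_of_nonneg_left (le_abs_self _) (pow_nonneg hγ0 _)
      _ ≤ γ * |p (hstarp.val + 1) - q (hstarp.val + 1)| := hpow _ _
      _ ≤ γ * M := mul_le_mul_of_nonneg_left (hle hstarp) hγ0
end
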